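/- Let v be a vertex of a Euclidean quadrilateral circle pattern cell with vertices v, v₁, v₂, u, where v is adjacent to v₁ and v₂, all four boundary edges have weight π/2 and the diagonal through v has weight 0. If all four radii are positive, then the angle at v in the quadrilateral (computed by dividing along either diagonal with a weight-0 diagonal edge) is independent of the choice of diagonal: dividing by the diagonal not through v gives the same angle at v as the sum of the two angles at v obtained by dividing along the diagonal through v. -/

import Mathlib

/-! The angle `arccos (r_v / √(r_v² + r_{vᵢ}²))` is the argument of `r_v + r_{vᵢ} i`. Both numbers
lie in the closed first quadrant, so the argument of their product is the sum of the two angles;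
the product is `(r_v² - r_{v₁} r_{v₂}) + r_v (r_{v₁} + r_{v₂}) i`, whose norm is the product of the
two norms, and its argument is the left-hand side. -/

open Real

namespace Complex

theorem arg_ofReal_add_ofReal_mul_I {x y : ℝ} (hy : 0 < y) :
    arg (x + y * I) = arccos (x / √(x ^ 2 + y ^ 2)) := by
  rw [arg_of_im_pos (by simpa using hy), norm_add_mul_I]
  simp

theorem arg_mul_of_re_nonneg_of_im_nonneg {z w : ℂ} (hz : z ≠ 0) (hw : w ≠ 0)
    (hz_re : 0 ≤ z.re) (hz_im : 0 ≤ z.im) (hw_re : 0 ≤ w.re) (hw_im : 0 ≤ w.im) :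
    arg (z * w) = arg z + arg w := by
  have hz₀ := arg_nonneg_iff.2 hz_im
  have hw₀ := arg_nonneg_iff.2 hw_im
  have hz₁ := arg_le_pi_div_two_iff.2 (Or.inl hz_re)
  have hw₁ := arg_le_pi_div_two_iff.2 (Or.inl hw_re)
  exact arg_mul hz hw ⟨by linarith [pi_pos], by linarith⟩

end Complex

open Complex in
theorem quadrilateral_angle_diagonal_independent
    (rv rv₁ rv₂ : ℝ) (hrv : 0 < rv) (hrv₁ : 0 < rv₁) (hrv₂ : 0 < rv₂) :
    Real.arccos ((rv ^ 2 - rv₁ * rv₂) /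
        (Real.sqrt (rv ^ 2 + rv₁ ^ 2) * Real.sqrt (rv ^ 2 + rv₂ ^ 2))) =
      Real.arccos (rv / Real.sqrt (rv ^ 2 + rv₁ ^ 2)) +
        Real.arccos (rv / Real.sqrt (rv ^ 2 + rv₂ ^ 2)) := by
  have hne {y : ℝ} (hy : 0 < y) : (rv + y * I : ℂ) ≠ 0 := fun h => by
    simpa [hy.ne'] using congrArg im h
  have him : 0 < ((rv + rv₁ * I) * (rv + rv₂ * I) : ℂ).im := by
    simp only [mul_im, add_re, ofReal_re, mul_re, I_re, mul_zero, ofReal_im, I_im, mul_one,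
      sub_self, add_zero, add_im, zero_add]
    positivity
  calc arccos ((rv ^ 2 - rv₁ * rv₂) / (√(rv ^ 2 + rv₁ ^ 2) * √(rv ^ 2 + rv₂ ^ 2)))
      = arg ((rv + rv₁ * I) * (rv + rv₂ * I)) := by
        rw [arg_of_im_pos him, norm_mul, norm_add_mul_I, norm_add_mul_I]
        simp [sq]
    _ = arg (rv + rv₁ * I) + arg (rv + rv₂ * I) :=
        arg_mul_of_re_nonneg_of_im_nonneg (hne hrv₁) (hne hrv₂) (by simpa using hrv.le)
          (by simpa using hrv₁.le) (by simpa using hrv.le) (by simpa using hrv₂.le)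
    _ = arccos (rv / √(rv ^ 2 + rv₁ ^ 2)) + arccos (rv / √(rv ^ 2 + rv₂ ^ 2)) := by
        rw [arg_ofReal_add_ofReal_mul_I hrv₁, arg_ofReal_add_ofReal_mul_I hrv₂]
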